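/- arXiv:math/9807118 — 10 statements merged into one kernel-verified Lean document; each statement's English description precedes it below -/
import Mathlib

section
/- (Kaloujnine–Krasner) Let A, B, G be groups and suppose G is an extension of A by B: there is an injective homomorphism α : A → G and a surjective homomorphism π : G → B with image of α equal to the kernel of π. Then there exists an injective group homomorphism γ : G → A ≀ B into the complete wreath product; moreover γ can be chosen so that the composite of γ with the canonical projection A ≀ B → B equals π. -/
/-- The complete (unrestricted regular) wreath product `N ≀ K`: the semidirect product
`(K → N) ⋊ K`, where `K → N` is the group of all functions under pointwise
multiplication and `k ∈ K` acts on `φ : K → N` by `(φ ^ k) y = φ (y * k⁻¹)`.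
An element is written as a pair `k·φ` with multiplication
`(k, φ) * (l, ψ) = (k * l, fun y => φ (y * l⁻¹) * ψ y)`. -/
structure WreathProduct (N K : Type u) [Group N] [Group K] : Type u where
  base : K
  fn : K → N

namespace WreathProduct

variable {N K : Type u} [Group N] [Group K]

instance : Mul (WreathProduct N K) :=
  ⟨fun w v => ⟨w.base * v.base, fun y => w.fn (y * v.base⁻¹) * v.fn y⟩⟩

instance : One (WreathProduct N K) := ⟨⟨1, fun _ => 1⟩⟩

instance : Inv (WreathProduct N K) :=
  ⟨fun w => ⟨w.base⁻¹, fun y => (w.fn (y * w.base))⁻¹⟩⟩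

@[simp] theorem mul_base (w v : WreathProduct N K) : (w * v).base = w.base * v.base := rfl
@[simp] theorem mul_fn (w v : WreathProduct N K) (y : K) :
    (w * v).fn y = w.fn (y * v.base⁻¹) * v.fn y := rfl
@[simp] theorem one_base : (1 : WreathProduct N K).base = 1 := rfl
@[simp] theorem one_fn (y : K) : (1 : WreathProduct N K).fn y = 1 := rfl
@[simp] theorem inv_base (w : WreathProduct N K) : w⁻¹.base = w.base⁻¹ := rfl
@[simp] theorem inv_fn (w : WreathProduct N K) (y : K) :
    w⁻¹.fn y = (w.fn (y * w.base))⁻¹ := rfl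

theorem ext' {w v : WreathProduct N K} (h1 : w.base = v.base)
    (h2 : ∀ y, w.fn y = v.fn y) : w = v := by
  cases w; cases v
  simp only [mk.injEq]
  exact ⟨h1, funext h2⟩

instance : Group (WreathProduct N K) where
  mul_assoc a b c := ext' (mul_assoc _ _ _) fun y => by
    simp [mul_inv_rev, mul_assoc]
  one_mul a := ext' (one_mul _) fun y => by simp
  mul_one a := ext' (mul_one _) fun y => by simp
  inv_mul_cancel a := ext' (inv_mul_cancel _) fun y => by simp

/-- The restricted wreath product `N wr K`, as the subgroup of the complete wreath
product consisting of elements whose function component has finite support. -/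
def restricted (N K : Type u) [Group N] [Group K] : Subgroup (WreathProduct N K) where
  carrier := {w | (Function.mulSupport w.fn).Finite}
  one_mem' := by
    simp [Function.mulSupport]
  mul_mem' := by
    intro a b ha hb
    refine Set.Finite.subset ?_ (Function.mulSupport_mul _ _)
    refine Set.Finite.union ?_ hb
    rw [show (fun y => a.fn (y * b.base⁻¹)) = a.fn ∘ (fun y => y * b.base⁻¹) from rfl,
      Function.mulSupport_comp_eq_preimage]
    exact ha.preimage (Set.injOn_of_injective (mul_left_injective _))
  inv_mem' := by
    intro a ha
    show (Function.mulSupport fun y => (a.fn (y * a.base))⁻¹).Finite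
    rw [show (Function.mulSupport fun y => (a.fn (y * a.base))⁻¹) =
        Function.mulSupport (fun y => a.fn (y * a.base))⁻¹ from rfl, Function.mulSupport_inv,
      show (fun y => a.fn (y * a.base)) = a.fn ∘ (fun y => y * a.base) from rfl,
      Function.mulSupport_comp_eq_preimage]
    exact ha.preimage (Set.injOn_of_injective (mul_left_injective _))

/-- The canonical projection from the complete wreath product `N ≀ K` onto `K`. -/
def proj (N K : Type u) [Group N] [Group K] : WreathProduct N K →* K where
  toFun := WreathProduct.base
  map_one' := rfl
  map_mul' _ _ := rfl

end WreathProduct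

/-!
Fix a set-theoretic section `s` of `π`. For `g ∈ G` and `y ∈ B` the element
`s (y * (π g)⁻¹) * g * (s y)⁻¹` lies in `ker π = α(A)`; these coordinates telescope under
multiplication, so `g ↦ (π g, y ↦ α⁻¹ (s (y * (π g)⁻¹) * g * (s y)⁻¹))` is a homomorphism into
`A ≀ B`. Since `π g` and the coordinate at `y = 1` determine `g`, it is injective.
-/

namespace WreathProduct

variable {A B G : Type u} [Group A] [Group B] [Group G] {α : A →* G} {π : G →* B} {s : B → G}

section
variable (α π s)

noncomputable def extensionCoord (g : G) (y : B) : A :=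
  Function.invFun α (s (y * (π g)⁻¹) * g * (s y)⁻¹)

end

theorem section_conj_mem_ker (hs : Function.RightInverse s π) (g : G) (y : B) :
    s (y * (π g)⁻¹) * g * (s y)⁻¹ ∈ π.ker := by
  simp [MonoidHom.mem_ker, hs _]

theorem map_extensionCoord (hs : Function.RightInverse s π) (hker : π.ker ≤ α.range)
    (g : G) (y : B) :
    α (extensionCoord α π s g y) = s (y * (π g)⁻¹) * g * (s y)⁻¹ :=
  Function.invFun_eq (hker (section_conj_mem_ker hs g y))

theorem extensionCoord_mul (hα : Function.Injective α) (hs : Function.RightInverse s π)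
    (hker : π.ker ≤ α.range) (g h : G) (y : B) :
    extensionCoord α π s (g * h) y =
      extensionCoord α π s g (y * (π h)⁻¹) * extensionCoord α π s h y := by
  apply hα
  simp only [map_mul, map_extensionCoord hs hker, mul_inv_rev, ← mul_assoc y]
  group

noncomputable def ofExtension (hα : Function.Injective α) (hs : Function.RightInverse s π)
    (hker : π.ker ≤ α.range) : G →* WreathProduct A B where
  toFun g := ⟨π g, extensionCoord α π s g⟩
  map_one' := ext' (map_one π) fun y => hα <| by simp [map_extensionCoord hs hker]
  map_mul' g h := ext' (map_mul π g h) (extensionCoord_mul hα hs hker g h)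

theorem ofExtension_injective (hα : Function.Injective α) (hs : Function.RightInverse s π)
    (hker : π.ker ≤ α.range) : Function.Injective (ofExtension hα hs hker) := by
  intro g h hgh
  have hbase : π g = π h := congrArg base hgh
  have hcoord := congrArg (fun w => α (fn w 1)) hgh
  simp only [ofExtension, MonoidHom.coe_mk, OneHom.coe_mk, map_extensionCoord hs hker,
    hbase] at hcoord
  exact mul_left_cancel (mul_right_cancel hcoord)

theorem proj_comp_ofExtension (hα : Function.Injective α) (hs : Function.RightInverse s π)
    (hker : π.ker ≤ α.range) : (proj A B).comp (ofExtension hα hs hker) = π :=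
  rfl

end WreathProduct

/-- **Kaloujnine–Krasner**: if `G` is an extension of `A` by `B`, then `G` embeds into the
complete wreath product `A ≀ B`, compatibly with the canonical projection onto `B`. -/
theorem stmt1 (A B G : Type u) [Group A] [Group B] [Group G]
    (α : A →* G) (π : G →* B) (hα : Function.Injective α) (hπ : Function.Surjective π)
    (hrange : α.range = π.ker) :
    ∃ γ : G →* WreathProduct A B, Function.Injective γ ∧
      (WreathProduct.proj A B).comp γ = π := by
  have hs : Function.RightInverse (Function.surjInv hπ) π := Function.rightInverse_surjInv hπ
  exact ⟨_, WreathProduct.ofExtension_injective hα hs hrange.ge,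
    WreathProduct.proj_comp_ofExtension hα hs hrange.ge⟩
end

section
/- Let 𝒩 be a nontrivial variety of groups and 𝒬 any variety of groups, and set 𝒱 = 𝒩𝒬. Let G be a group belonging to 𝒬 and H a subgroup of G. Then dom_G^𝒱(H) = H. -/
/-- A bundled group: a type in universe `u` together with a group structure. -/
structure GroupT : Type (u + 1) where
  carrier : Type u
  [str : Group carrier]

attribute [instance] GroupT.str

/-- A variety of groups: a class of groups closed under isomorphism, subgroups,
homomorphic images, and arbitrary direct products indexed by types in the universe. -/
structure GroupVariety : Type (u + 1) where
  Mem : GroupT.{u} → Prop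
  iso_closed : ∀ {G H : GroupT.{u}}, G.carrier ≃* H.carrier → Mem G → Mem H
  subgroup_closed : ∀ (G : GroupT.{u}) (H : Subgroup G.carrier), Mem G → Mem ⟨H⟩
  quotient_closed : ∀ (G H : GroupT.{u}) (f : G.carrier →* H.carrier),
      Function.Surjective f → Mem G → Mem H
  pi_closed : ∀ (ι : Type u) (f : ι → GroupT.{u}),
      (∀ i, Mem (f i)) → Mem ⟨∀ i, (f i).carrier⟩

/-- A variety is nontrivial if it contains some nontrivial group and
does not contain all groups. -/
def GroupVariety.IsNontrivial (V : GroupVariety.{u}) : Prop :=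
  (∃ G : GroupT.{u}, V.Mem G ∧ Nontrivial G.carrier) ∧ ∃ G : GroupT.{u}, ¬ V.Mem G

/-- The dominion of a subgroup `H` of `G` relative to a class `C` of groups:
all elements of `G` on which any two homomorphisms into a `C`-group agreeing on `H`
must agree. -/
def dominion (C : GroupT.{u} → Prop) (G : Type u) [Group G] (H : Subgroup G) : Set G :=
  {a | ∀ K : GroupT.{u}, C K → ∀ f g : G →* K.carrier, (∀ h ∈ H, f h = g h) → f a = g a}

/-- The product variety `𝒩𝒬`: the class of groups having a normal subgroup in `𝒩`
with quotient in `𝒬`. -/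
def ProductVariety (N Q : GroupVariety.{u}) (G : GroupT.{u}) : Prop :=
  ∃ (M : Subgroup G.carrier) (h : M.Normal),
    N.Mem ⟨M⟩ ∧ (letI := h; Q.Mem ⟨G.carrier ⧸ M⟩)

/-- The verbal subgroup `𝒬(G)`: the intersection of all normal subgroups of `G`
whose quotient lies in `𝒬`. -/
def verbalSubgroup (Q : GroupVariety.{u}) (G : Type u) [Group G] : Subgroup G :=
  ⨅ M ∈ {M : Subgroup G | ∃ h : M.Normal, (letI := h; Q.Mem ⟨G ⧸ M⟩)}, M

section Wreath

variable {G : Type u} [Group G] (H : Subgroup G) {A : Type u} [Group A]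

/-- The action of `G` on functions `G ⧸ H → A` by permuting coordinates. -/
def actPerm (g : G) : ((G ⧸ H) → A) ≃* ((G ⧸ H) → A) where
  toFun m C := m (g⁻¹ • C)
  invFun m C := m (g • C)
  left_inv m := by funext C; simp [smul_smul]
  right_inv m := by funext C; simp [smul_smul]
  map_mul' m n := rfl

/-- The action as a homomorphism into the automorphism group. -/
def actHom : G →* MulAut ((G ⧸ H) → A) where
  toFun := actPerm H
  map_one' := by ext m C; simp [actPerm]
  map_mul' g₁ g₂ := by ext m C; simp [actPerm, mul_smul, mul_inv_rev]

open Classical in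
/-- A 1-cocycle `G → ((G ⧸ H) → A)` vanishing exactly on `H` (for `t ≠ 1`). -/
noncomputable def delta (t : A) (g : G) : (G ⧸ H) → A := fun C =>
  t ^ ((if C = (g : G ⧸ H) then (1 : ℤ) else 0) - (if C = ((1 : G) : G ⧸ H) then 1 else 0))

lemma delta_cocycle (t : A) (g₁ g₂ : G) :
    delta H t (g₁ * g₂) = delta H t g₁ * (actHom H g₁ (delta H t g₂)) := by
  classical
  funext C
  rw [Pi.mul_apply]
  show delta H t (g₁ * g₂) C = delta H t g₁ C * delta H t g₂ (g₁⁻¹ • C)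
  simp only [delta]
  rw [← zpow_add]
  have h1 : (g₁⁻¹ • C = (g₂ : G ⧸ H)) ↔ (C = ((g₁ * g₂ : G) : G ⧸ H)) := by
    rw [inv_smul_eq_iff, MulAction.Quotient.smul_mk]; rfl
  have h2 : (g₁⁻¹ • C = ((1 : G) : G ⧸ H)) ↔ (C = ((g₁ : G) : G ⧸ H)) := by
    rw [inv_smul_eq_iff, MulAction.Quotient.smul_mk, smul_eq_mul, mul_one]
  congr 1
  simp only [h1, h2]
  split_ifs <;> ring

lemma delta_mem (t : A) {h : G} (hh : h ∈ H) : delta H t h = 1 := by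
  funext C
  have hq : ((h : G ⧸ H)) = ((1 : G) : G ⧸ H) := by
    rw [QuotientGroup.eq]; simpa using H.inv_mem hh
  show t ^ _ = 1
  rw [hq, sub_self, zpow_zero]

/-- The crossed homomorphism into the semidirect product. -/
noncomputable def crossedHom (t : A) :
    G →* SemidirectProduct ((G ⧸ H) → A) G (actHom H) :=
  MonoidHom.mk' (fun g => ⟨delta H t g, g⟩) (fun g₁ g₂ => by
    rw [SemidirectProduct.mul_def]
    show (⟨delta H t (g₁ * g₂), g₁ * g₂⟩ : SemidirectProduct _ _ _)
        = ⟨delta H t g₁ * actHom H g₁ (delta H t g₂), g₁ * g₂⟩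
    rw [delta_cocycle])

lemma crossedHom_left (t : A) (g : G) : (crossedHom H t g).left = delta H t g := rfl

end Wreath

theorem stmt2 (𝒩 𝒬 : GroupVariety.{u}) (h𝒩 : 𝒩.IsNontrivial)
    (G : Type u) [Group G] (hG : 𝒬.Mem ⟨G⟩) (H : Subgroup G) :
    dominion (ProductVariety 𝒩 𝒬) G H = (H : Set G) := by
  classical
  obtain ⟨⟨A₀, hA₀mem, hA₀nt⟩, -⟩ := h𝒩
  apply Set.eq_of_subset_of_subset
  · intro a ha
    by_contra haH
    obtain ⟨t, ht⟩ := exists_ne (1 : A₀.carrier)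
    -- the wreath-type product
    set W : GroupT.{u} := ⟨SemidirectProduct ((G ⧸ H) → A₀.carrier) G (actHom H)⟩ with hW
    have hWmem : ProductVariety 𝒩 𝒬 W := by
      refine ⟨(SemidirectProduct.rightHom
        (N := (G ⧸ H) → A₀.carrier) (φ := actHom H)).ker, inferInstance, ?_, ?_⟩
      · have hpi : 𝒩.Mem ⟨(G ⧸ H) → A₀.carrier⟩ :=
          𝒩.pi_closed (G ⧸ H) (fun _ => A₀) (fun _ => hA₀mem)
        refine 𝒩.iso_closed (G := ⟨(G ⧸ H) → A₀.carrier⟩) ?_ hpi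
        exact (MonoidHom.ofInjective
            (f := (SemidirectProduct.inl :
              ((G ⧸ H) → A₀.carrier) →* SemidirectProduct _ _ (actHom H)))
            SemidirectProduct.inl_injective).trans
          (MulEquiv.subgroupCongr SemidirectProduct.range_inl_eq_ker_rightHom)
      · refine 𝒬.iso_closed (G := ⟨G⟩) ?_ hG
        exact (QuotientGroup.quotientKerEquivOfSurjective SemidirectProduct.rightHom
          SemidirectProduct.rightHom_surjective).symm
    have key := ha W hWmem SemidirectProduct.inr (crossedHom H t) (by
      intro h hh
      show SemidirectProduct.inr h = (⟨delta H t h, h⟩ : W.carrier)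
      rw [delta_mem H t hh]; rfl)
    have hδ : delta H t a = 1 := by
      have h2 := congrArg SemidirectProduct.left key
      rw [SemidirectProduct.left_inr, crossedHom_left] at h2
      exact h2.symm
    have heval := congrFun hδ ((a : G ⧸ H))
    have hne : ¬ ((a : G ⧸ H) = ((1 : G) : G ⧸ H)) := by
      rw [QuotientGroup.eq]
      exact fun h => haH (by simpa using H.inv_mem h)
    rw [show delta H t a ((a : G ⧸ H)) =
        t ^ ((if (a : G ⧸ H) = (a : G ⧸ H) then (1 : ℤ) else 0) -
          (if (a : G ⧸ H) = ((1 : G) : G ⧸ H) then 1 else 0)) from by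
        simp [delta]] at heval
    rw [if_pos rfl, if_neg hne, sub_zero, zpow_one, Pi.one_apply] at heval
    exact ht heval
  · intro a ha K hK f g hfg
    exact hfg a ha
end

section
/- Let 𝒩 be a nontrivial variety of groups, 𝒬 a variety of groups, and 𝒱 = 𝒩𝒬. Let G ∈ 𝒱, and let N be a normal subgroup of G with N ∈ 𝒩 and G/N ∈ 𝒬. Then for every subgroup H of G, dom_G^𝒱(H) ⊆ NH. In particular, dom_G^𝒱(H) ⊆ 𝒬(G)·H, where 𝒬(G) is the verbal subgroup of G associated to 𝒬. -/
/-!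
Let `M ∈ 𝒩` be normal with `G ⧸ M ∈ 𝒬`, and let `G` act on `X = G ⧸ (M ⊔ H)`, on which `M` acts
trivially. For a nontrivial `B ∈ 𝒩`, the kernel of `(X → B) ⋊ G → G ⧸ M` is `(X → B) × M ∈ 𝒩`,
so `(X → B) ⋊ G ∈ 𝒩𝒬`. The embedding `inr` and its conjugate by `inl (Pi.mulSingle x₀ ε)`,
with `x₀` the base coset and `ε ≠ 1`, agree exactly on the stabilizer `M ⊔ H = MH` of `x₀`;
hence the dominion of `H` lies in `MH`. This applies to `M = N`, and to `M = 𝒬(G)`: it lies in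
`𝒩` as a subgroup of `N`, and `G ⧸ 𝒬(G)` embeds into a product of groups in `𝒬`.
-/

open scoped Pointwise

namespace GroupVariety

variable (V : GroupVariety.{u})

theorem mem_of_injective {P Q : Type u} [Group P] [Group Q] {f : P →* Q}
    (hf : Function.Injective f) (hQ : V.Mem ⟨Q⟩) : V.Mem ⟨P⟩ :=
  V.iso_closed (G := ⟨f.range⟩) (MonoidHom.ofInjective hf).symm
    (V.subgroup_closed ⟨Q⟩ f.range hQ)

theorem mem_prod {P Q : Type u} [Group P] [Group Q] (hP : V.Mem ⟨P⟩) (hQ : V.Mem ⟨Q⟩) :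
    V.Mem ⟨P × Q⟩ := by
  let F : ULift.{u} Bool → GroupT.{u} := fun i => cond i.down ⟨P⟩ ⟨Q⟩
  have hF : V.Mem ⟨∀ i, (F i).carrier⟩ :=
    V.pi_closed _ F fun | ⟨true⟩ => hP | ⟨false⟩ => hQ
  refine V.iso_closed ?_ hF
  exact
    { toFun := fun p => (p ⟨true⟩, p ⟨false⟩)
      invFun := fun z => fun | ⟨true⟩ => z.1 | ⟨false⟩ => z.2
      left_inv := fun p => funext fun | ⟨true⟩ => rfl | ⟨false⟩ => rfl
      right_inv := fun _ => rfl
      map_mul' := fun _ _ => rfl }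

end GroupVariety

section Verbal

variable (Q : GroupVariety.{u}) {G : Type u} [Group G]

theorem mem_verbalSubgroup_iff {x : G} :
    x ∈ verbalSubgroup Q G ↔
      ∀ M : Subgroup G, (∃ h : M.Normal, (letI := h; Q.Mem ⟨G ⧸ M⟩)) → x ∈ M := by
  simp only [verbalSubgroup, Subgroup.mem_iInf]
  rfl

theorem verbalSubgroup_le (M : Subgroup G) [hM : M.Normal] (hQ : Q.Mem ⟨G ⧸ M⟩) :
    verbalSubgroup Q G ≤ M :=
  fun _ hx => (mem_verbalSubgroup_iff Q).mp hx M ⟨hM, hQ⟩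

variable (G)

instance verbalSubgroup_normal : (verbalSubgroup Q G).Normal where
  conj_mem x hx g := (mem_verbalSubgroup_iff Q).mpr fun M hM =>
    hM.1.conj_mem x ((mem_verbalSubgroup_iff Q).mp hx M hM) g

theorem GroupVariety.mem_quotient_verbalSubgroup : Q.Mem ⟨G ⧸ verbalSubgroup Q G⟩ := by
  let ι := {M : Subgroup G // ∃ h : M.Normal, (letI := h; Q.Mem ⟨G ⧸ M⟩)}
  let F : ι → GroupT.{u} := fun M => letI := M.2.1; ⟨G ⧸ M.1⟩
  let _ (M : ι) : Group (F M).carrier := (F M).str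
  let Φ : G →* ∀ M, (F M).carrier :=
    MonoidHom.pi fun M => letI := M.2.1; QuotientGroup.mk' M.1
  have hker : Φ.ker = verbalSubgroup Q G := by
    ext x
    rw [mem_verbalSubgroup_iff, MonoidHom.mem_ker, funext_iff]
    refine ⟨fun hx M hM => ?_, fun hx M => ?_⟩
    · have := hM.1
      exact (QuotientGroup.eq_one_iff x).mp (hx ⟨M, hM⟩)
    · have := M.2.1
      exact (QuotientGroup.eq_one_iff x).mpr (hx M.1 M.2)
  let e := QuotientGroup.quotientMulEquivOfEq hker.symm
  exact Q.mem_of_injective (f := (QuotientGroup.kerLift Φ).comp e.toMonoidHom)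
    ((QuotientGroup.kerLift_injective Φ).comp e.injective) (Q.pi_closed ι F fun M => M.2.2)

end Verbal

theorem ProductVariety.of_surjective {𝒩 𝒬 : GroupVariety.{u}} {K Q : Type u} [Group K]
    [Group Q] {ρ : K →* Q} (hρ : Function.Surjective ρ) (hker : 𝒩.Mem ⟨ρ.ker⟩)
    (hQ : 𝒬.Mem ⟨Q⟩) : ProductVariety 𝒩 𝒬 ⟨K⟩ :=
  ⟨ρ.ker, inferInstance, hker,
    𝒬.iso_closed (QuotientGroup.quotientKerEquivOfSurjective ρ hρ).symm hQ⟩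

namespace SemidirectProduct

variable {N G : Type*} [Group N] [Group G] {φ : G →* MulAut N}

theorem commute_inl_inr_iff {n : N} {g : G} :
    Commute (inl n : N ⋊[φ] G) (inr g) ↔ φ g n = n := by
  rw [← inl_inj (φ := φ), inl_aut, map_inv, mul_inv_eq_iff_eq_mul, eq_comm]
  rfl

def comapRightHomToProd {M : Subgroup G} (hM : M ≤ φ.ker) :
    M.comap (rightHom : N ⋊[φ] G →* G) →* N × M where
  toFun x := (x.1.left, ⟨x.1.right, x.2⟩)
  map_one' := rfl
  map_mul' x _ := by
    have hx : φ x.1.right = 1 := hM x.2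
    ext
    · simp only [Subgroup.coe_mul, mul_left, hx, MulAut.one_apply, Prod.fst_mul]
    · rfl

theorem comapRightHomToProd_injective {M : Subgroup G} (hM : M ≤ φ.ker) :
    Function.Injective (comapRightHomToProd (N := N) hM) := fun _ _ h =>
  Subtype.ext (SemidirectProduct.ext (congrArg Prod.fst h) (congrArg (fun z => (z.2 : G)) h))

end SemidirectProduct

open SemidirectProduct in
theorem ProductVariety.semidirectProduct {𝒩 𝒬 : GroupVariety.{u}} {N G : Type u} [Group N]
    [Group G] {φ : G →* MulAut N} (M : Subgroup G) [M.Normal] (hφ : M ≤ φ.ker)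
    (hN : 𝒩.Mem ⟨N⟩) (hM : 𝒩.Mem ⟨M⟩) (hQ : 𝒬.Mem ⟨G ⧸ M⟩) :
    ProductVariety 𝒩 𝒬 ⟨N ⋊[φ] G⟩ := by
  let ρ : N ⋊[φ] G →* G ⧸ M := (QuotientGroup.mk' M).comp rightHom
  have hker : ρ.ker = M.comap rightHom := by
    rw [← MonoidHom.comap_ker, QuotientGroup.ker_mk']
  refine ProductVariety.of_surjective (ρ := ρ)
    ((QuotientGroup.mk'_surjective M).comp rightHom_surjective) ?_ hQ
  rw [hker]
  exact 𝒩.mem_of_injective (comapRightHomToProd_injective hφ) (𝒩.mem_prod hN hM)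

theorem ker_toPermHom_le_ker_mulAutArrow {G X A : Type*} [Group G] [MulAction G X]
    [Monoid A] :
    (MulAction.toPermHom G X).ker ≤ (mulAutArrow : G →* MulAut (X → A)).ker := by
  intro g hg
  have hg' : ∀ x : X, g⁻¹ • x = x := fun x => by
    rw [inv_smul_eq_iff]
    exact (congrArg (· x) (MonoidHom.mem_ker.mp hg)).symm
  ext F x
  exact congrArg F (hg' x)

theorem mulAutArrow_mulSingle {G X A : Type*} [Group G] [MulAction G X] [Monoid A]
    [DecidableEq X] (g : G) (x : X) (a : A) :
    mulAutArrow g (Pi.mulSingle x a) = Pi.mulSingle (g • x) a := by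
  ext y
  show Pi.mulSingle (M := fun _ => A) x a (g⁻¹ • y) = _
  simp only [Pi.mulSingle_apply, inv_smul_eq_iff]

theorem dominion_subset_setOf_commute {C : GroupT.{u} → Prop} {G : Type u} [Group G]
    {H : Subgroup G} {K : GroupT.{u}} (hK : C K) (ψ : G →* K.carrier) (k : K.carrier)
    (hH : ∀ h ∈ H, Commute k (ψ h)) : dominion C G H ⊆ {g | Commute k (ψ g)} := by
  have hconj : ∀ g, MulAut.conj k (ψ g) = ψ g ↔ Commute k (ψ g) := fun g =>
    mul_inv_eq_iff_eq_mul
  intro a ha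
  exact (hconj a).mp
    (ha K hK ((MulAut.conj k).toMonoidHom.comp ψ) ψ fun h hh => (hconj h).mpr (hH h hh))

open SemidirectProduct in
theorem dominion_subset_stabilizer {C : GroupT.{u} → Prop} {G X A : Type u} [Group G]
    [MulAction G X] [Group A] [Nontrivial A] (hC : C ⟨(X → A) ⋊[mulAutArrow] G⟩)
    {H : Subgroup G} {x : X} (hH : H ≤ MulAction.stabilizer G x) :
    dominion C G H ⊆ MulAction.stabilizer G x := by
  classical
  obtain ⟨ε, hε⟩ := exists_ne (1 : A)
  have hcomm : ∀ g : G,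
      Commute (inl (Pi.mulSingle x ε) : (X → A) ⋊[mulAutArrow] G) (inr g) ↔
        g ∈ MulAction.stabilizer G x := by
    intro g
    rw [commute_inl_inr_iff, mulAutArrow_mulSingle, MulAction.mem_stabilizer_iff]
    refine ⟨fun h => ?_, fun h => by rw [h]⟩
    by_contra hgx
    have := congrFun h (g • x)
    simp [hgx, hε] at this
  intro a ha
  exact (hcomm a).mp
    (dominion_subset_setOf_commute hC _ _ (fun h hh => (hcomm h).mpr (hH hh)) ha)

theorem dominion_productVariety_subset_mul {𝒩 𝒬 : GroupVariety.{u}}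
    (h𝒩 : ∃ B : GroupT.{u}, 𝒩.Mem B ∧ Nontrivial B.carrier) {G : Type u} [Group G]
    (M : Subgroup G) [M.Normal] (hM : 𝒩.Mem ⟨M⟩) (hQ : 𝒬.Mem ⟨G ⧸ M⟩)
    (H : Subgroup G) : dominion (ProductVariety 𝒩 𝒬) G H ⊆ (M : Set G) * (H : Set G) := by
  obtain ⟨⟨B, _⟩, hB, _⟩ := h𝒩
  have hMJ : M ≤ (mulAutArrow : G →* MulAut (G ⧸ (M ⊔ H) → B)).ker := by
    refine le_trans ?_ ker_toPermHom_le_ker_mulAutArrow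
    rw [← Subgroup.normalCore_eq_ker, Subgroup.normal_le_normalCore]
    exact le_sup_left
  have hK := ProductVariety.semidirectProduct M hMJ
    (𝒩.pi_closed _ (fun _ => ⟨B⟩) fun _ => hB) hM hQ
  rw [← Subgroup.normal_mul, ← MulAction.stabilizer_quotient (M ⊔ H)]
  exact dominion_subset_stabilizer hK (by rw [MulAction.stabilizer_quotient]; exact le_sup_right)

theorem stmt3_general (𝒩 𝒬 : GroupVariety.{u}) (h𝒩 : 𝒩.IsNontrivial)
    (G : Type u) [Group G]
    (N : Subgroup G) [hN : N.Normal] (hNmem : 𝒩.Mem ⟨N⟩) (hQ : 𝒬.Mem ⟨G ⧸ N⟩)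
    (H : Subgroup G) :
    dominion (ProductVariety 𝒩 𝒬) G H ⊆ (N : Set G) * (H : Set G) ∧
      dominion (ProductVariety 𝒩 𝒬) G H ⊆ (verbalSubgroup 𝒬 G : Set G) * (H : Set G) := by
  have hV : 𝒩.Mem ⟨verbalSubgroup 𝒬 G⟩ :=
    𝒩.mem_of_injective (Subgroup.inclusion_injective (verbalSubgroup_le 𝒬 N hQ)) hNmem
  exact ⟨dominion_productVariety_subset_mul h𝒩.1 N hNmem hQ H,
    dominion_productVariety_subset_mul h𝒩.1 _ hV (𝒬.mem_quotient_verbalSubgroup G) H⟩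

theorem stmt3 (𝒩 𝒬 : GroupVariety.{u}) (h𝒩 : 𝒩.IsNontrivial)
    (G : Type u) [Group G] (hG : ProductVariety 𝒩 𝒬 ⟨G⟩)
    (N : Subgroup G) [hN : N.Normal] (hNmem : 𝒩.Mem ⟨N⟩) (hQ : 𝒬.Mem ⟨G ⧸ N⟩)
    (H : Subgroup G) :
    dominion (ProductVariety 𝒩 𝒬) G H ⊆ (N : Set G) * (H : Set G) ∧
      dominion (ProductVariety 𝒩 𝒬) G H ⊆ (verbalSubgroup 𝒬 G : Set G) * (H : Set G) :=
  stmt3_general 𝒩 𝒬 h𝒩 G N (hN := hN) hNmem hQ H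
end

section
/- Let 𝒩 and 𝒬 be nontrivial varieties of groups and 𝒱 = 𝒩𝒬. Let G ∈ 𝒱, H a subgroup of G, N = 𝒬(G) the verbal subgroup of G associated to 𝒬, and let D = dom_N^𝒩(N ∩ H) be the dominion (in the variety 𝒩) of N ∩ H in the group N, regarded as a subgroup of G. Then the set of products HD equals the subgroup ⟨H, D⟩ generated by H and D, and HD ⊆ dom_G^{𝒩𝒬}(H). -/
open scoped Pointwise

section Aux

variable {C : GroupT.{u} → Prop} {G : Type u} [Group G]

theorem dominion_one_mem (H : Subgroup G) : (1 : G) ∈ dominion C G H :=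
  fun _K _hK f g _hfg => by rw [map_one, map_one]

theorem dominion_mul_mem {H : Subgroup G} {a b : G} (ha : a ∈ dominion C G H)
    (hb : b ∈ dominion C G H) : a * b ∈ dominion C G H :=
  fun K hK f g hfg => by rw [map_mul, map_mul, ha K hK f g hfg, hb K hK f g hfg]

theorem dominion_inv_mem {H : Subgroup G} {a : G} (ha : a ∈ dominion C G H) :
    a⁻¹ ∈ dominion C G H :=
  fun K hK f g hfg => by rw [map_inv, map_inv, ha K hK f g hfg]

theorem verbal_normal (Q : GroupVariety.{u}) (G : Type u) [Group G] :
    (verbalSubgroup Q G).Normal := by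
  constructor
  intro n hn g
  simp only [verbalSubgroup, Subgroup.mem_iInf] at hn ⊢
  intro M hM
  have hn' := hn M hM
  obtain ⟨hMnorm, -⟩ := hM
  exact hMnorm.conj_mem n hn' g

/-- Conjugation by an element of `H` preserves the dominion of `H ∩ N` in `N`. -/
theorem conj_mem_dominion {H N : Subgroup G} (hNn : N.Normal)
    {h : G} (hh : h ∈ H) {n : ↥N} (hn : n ∈ dominion C (↥N) (H.subgroupOf N)) :
    (⟨h * ↑n * h⁻¹, hNn.conj_mem _ n.2 h⟩ : ↥N) ∈ dominion C (↥N) (H.subgroupOf N) := by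
  intro K hK f g hfg
  let c : ↥N →* ↥N :=
  { toFun := fun x => ⟨h * ↑x * h⁻¹, hNn.conj_mem _ x.2 h⟩
    map_one' := by ext; simp
    map_mul' := by intro a b; ext; push_cast; group }
  have hc : ∀ x : ↥N, x ∈ H.subgroupOf N → c x ∈ H.subgroupOf N := by
    intro x hx
    simp only [Subgroup.mem_subgroupOf] at hx ⊢
    exact H.mul_mem (H.mul_mem hh hx) (H.inv_mem hh)
  exact hn K hK (f.comp c) (g.comp c) (fun x hx => hfg (c x) (hc x hx))

end Aux

theorem stmt4 (𝒩 𝒬 : GroupVariety.{u}) (h𝒩 : 𝒩.IsNontrivial) (h𝒬 : 𝒬.IsNontrivial)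
    (G : Type u) [Group G] (hG : ProductVariety 𝒩 𝒬 ⟨G⟩) (H : Subgroup G)
    (N : Subgroup G) (hN : N = verbalSubgroup 𝒬 G)
    (D : Set G) (hD : D = Subtype.val '' dominion 𝒩.Mem (↥N) (H.subgroupOf N)) :
    (H : Set G) * D = (Subgroup.closure ((H : Set G) ∪ D) : Set G) ∧
      (H : Set G) * D ⊆ dominion (ProductVariety 𝒩 𝒬) G H := by
  have hNnorm : N.Normal := hN ▸ verbal_normal 𝒬 G
  -- basic closure properties of D
  have hD1 : (1 : G) ∈ D := by
    rw [hD]; exact ⟨1, dominion_one_mem _, rfl⟩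
  have hDmul : ∀ a ∈ D, ∀ b ∈ D, a * b ∈ D := by
    rw [hD]
    rintro _ ⟨a, ha, rfl⟩ _ ⟨b, hb, rfl⟩
    exact ⟨a * b, dominion_mul_mem ha hb, rfl⟩
  have hDinv : ∀ a ∈ D, a⁻¹ ∈ D := by
    rw [hD]
    rintro _ ⟨a, ha, rfl⟩
    exact ⟨a⁻¹, dominion_inv_mem ha, rfl⟩
  have hDconj : ∀ h ∈ H, ∀ d ∈ D, h * d * h⁻¹ ∈ D := by
    rw [hD]
    rintro h hh _ ⟨n, hn, rfl⟩
    exact ⟨⟨h * ↑n * h⁻¹, hNnorm.conj_mem _ n.2 h⟩, conj_mem_dominion hNnorm hh hn, rfl⟩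
  -- HD is a subgroup
  let S : Subgroup G :=
  { carrier := (H : Set G) * D
    one_mem' := ⟨1, H.one_mem, 1, hD1, by simp⟩
    mul_mem' := by
      rintro _ _ ⟨h1, hh1, d1, hd1, rfl⟩ ⟨h2, hh2, d2, hd2, rfl⟩
      refine ⟨h1 * h2, H.mul_mem hh1 hh2,
        (h2⁻¹ * d1 * h2⁻¹⁻¹) * d2, hDmul _ (hDconj h2⁻¹ (H.inv_mem hh2) d1 hd1) _ hd2, ?_⟩
      group
    inv_mem' := by
      rintro _ ⟨h, hh, d, hd, rfl⟩
      refine ⟨h⁻¹, H.inv_mem hh, h * d⁻¹ * h⁻¹, hDconj h hh d⁻¹ (hDinv d hd), ?_⟩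
      group }
  have hS : Subgroup.closure ((H : Set G) ∪ D) = S := by
    apply le_antisymm
    · rw [Subgroup.closure_le]
      rintro x (hx | hx)
      · exact ⟨x, hx, 1, hD1, by simp⟩
      · exact ⟨1, H.one_mem, x, hx, by simp⟩
    · rintro _ ⟨h, hh, d, hd, rfl⟩
      exact Subgroup.mul_mem _ (Subgroup.subset_closure (Or.inl hh))
        (Subgroup.subset_closure (Or.inr hd))
  constructor
  · rw [hS]; rfl
  · rintro _ ⟨h, hh, d, hd, rfl⟩
    rw [hD] at hd
    obtain ⟨n, hn, rfl⟩ := hd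
    rintro K ⟨M, hMnorm, hM𝒩, hMQ⟩ f g hfg
    haveI := hMnorm
    have key : ∀ φ : G →* K.carrier, N ≤ ((QuotientGroup.mk' M).comp φ).ker := by
      intro φ
      rw [hN]
      set ψ := (QuotientGroup.mk' M).comp φ with hψ
      have hmem : ψ.ker ∈ {M' : Subgroup G | ∃ h : M'.Normal,
          (letI := h; 𝒬.Mem ⟨G ⧸ M'⟩)} := by
        refine ⟨ψ.normal_ker, ?_⟩
        have h1 : 𝒬.Mem ⟨ψ.range⟩ := 𝒬.subgroup_closed ⟨K.carrier ⧸ M⟩ ψ.range hMQ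
        exact 𝒬.iso_closed (QuotientGroup.quotientKerEquivRange ψ).symm h1
      exact biInf_le _ hmem
    have hfM : ∀ x : ↥N, f ↑x ∈ M := by
      intro x
      have := key f x.2
      rwa [MonoidHom.mem_ker, MonoidHom.comp_apply, QuotientGroup.mk'_apply,
        QuotientGroup.eq_one_iff] at this
    have hgM : ∀ x : ↥N, g ↑x ∈ M := by
      intro x
      have := key g x.2
      rwa [MonoidHom.mem_ker, MonoidHom.comp_apply, QuotientGroup.mk'_apply,
        QuotientGroup.eq_one_iff] at this
    let f' : ↥N →* ↥M := (f.comp N.subtype).codRestrict M (fun x => hfM x)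
    let g' : ↥N →* ↥M := (g.comp N.subtype).codRestrict M (fun x => hgM x)
    have hagree : ∀ x ∈ H.subgroupOf N, f' x = g' x := by
      intro x hx
      rw [Subgroup.mem_subgroupOf] at hx
      exact Subtype.ext (hfg ↑x hx)
    have hfn : f ↑n = g ↑n := congrArg Subtype.val (hn ⟨↥M⟩ hM𝒩 f' g' hagree)
    rw [map_mul, map_mul, hfg h hh, hfn]
end

section
/- Let 𝒩 and 𝒬 be varieties of groups with 𝒩 ⊆ 𝒬, and let G be a group belonging to 𝒩. Then for every subgroup H of G, dom_G^{𝒩𝒬}(H) = H. -/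
open scoped Classical

universe u


/-- The action of `G` on functions `G ⧸ H → G` by permuting coordinates. -/
def permAut (G : Type u) [Group G] (H : Subgroup G) : G →* MulAut ((G ⧸ H) → G) where
  toFun x :=
    { toFun := fun θ c => θ (x⁻¹ • c)
      invFun := fun θ c => θ (x • c)
      left_inv := fun θ => by funext c; simp
      right_inv := fun θ => by funext c; simp
      map_mul' := fun θ₁ θ₂ => rfl }
  map_one' := by ext θ c; simp
  map_mul' x y := by ext θ c; simp [mul_smul]

@[simp] lemma permAut_apply (G : Type u) [Group G] (H : Subgroup G)
    (x : G) (θ : (G ⧸ H) → G) (c : G ⧸ H) :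
    permAut G H x θ c = θ (x⁻¹ • c) := rfl

theorem stmt9 (𝒩 𝒬 : GroupVariety.{u}) (hsub : ∀ G : GroupT.{u}, 𝒩.Mem G → 𝒬.Mem G)
    (G : Type u) [Group G] (hG : 𝒩.Mem ⟨G⟩) (H : Subgroup G) :
    dominion (ProductVariety 𝒩 𝒬) G H = (H : Set G) := by
  apply Set.Subset.antisymm
  · intro a ha
    by_contra haH
    set W := ((G ⧸ H) → G) ⋊[permAut G H] G with hWdef
    -- W belongs to the product variety
    have hmemW : ProductVariety 𝒩 𝒬 ⟨W⟩ := by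
      refine ⟨(SemidirectProduct.rightHom : W →* G).ker, inferInstance, ?_, ?_⟩
      · have hpi : 𝒩.Mem ⟨(G ⧸ H) → G⟩ := 𝒩.pi_closed (G ⧸ H) (fun _ => ⟨G⟩) (fun _ => hG)
        have e : ((G ⧸ H) → G) ≃* (SemidirectProduct.rightHom : W →* G).ker :=
          (MonoidHom.ofInjective (SemidirectProduct.inl_injective
            (φ := permAut G H))).trans
            (MulEquiv.subgroupCongr SemidirectProduct.range_inl_eq_ker_rightHom)
        exact 𝒩.iso_closed e hpi
      · have e : W ⧸ (SemidirectProduct.rightHom : W →* G).ker ≃* G :=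
          QuotientGroup.quotientKerEquivOfSurjective _
            SemidirectProduct.rightHom_surjective
        exact 𝒬.iso_closed e.symm (hsub ⟨G⟩ hG)
    -- the indicator function θ
    set θ : (G ⧸ H) → G := fun c => if c = ((1 : G) : G ⧸ H) then a else 1 with hθ
    -- the two homomorphisms
    set f : G →* W := SemidirectProduct.inr with hf
    set g : G →* W :=
      (MulAut.conj (SemidirectProduct.inl θ : W)).toMonoidHom.comp
        SemidirectProduct.inr with hg
    have e1 : ∀ x : G, ((SemidirectProduct.inr x : W) * SemidirectProduct.inl θ).left
        = permAut G H x θ := fun x => one_mul _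
    have e2 : ∀ x : G, ((SemidirectProduct.inl θ : W) * SemidirectProduct.inr x).left
        = θ := fun x => mul_one _
    have key : ∀ x : G, f x = g x ↔ permAut G H x θ = θ := by
      intro x
      have hgx : g x = SemidirectProduct.inl θ * SemidirectProduct.inr x *
          (SemidirectProduct.inl θ)⁻¹ := rfl
      rw [hgx, eq_mul_inv_iff_mul_eq]
      constructor
      · intro h
        have h3 := congrArg SemidirectProduct.left h
        rw [hf] at h3
        rw [e1, e2] at h3
        exact h3
      · intro h
        have hr : ((SemidirectProduct.inr x : W) * SemidirectProduct.inl θ).right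
            = ((SemidirectProduct.inl θ : W) * SemidirectProduct.inr x).right :=
          (mul_one x).trans (one_mul x).symm
        rw [hf]
        exact SemidirectProduct.ext ((e1 x).trans (h.trans (e2 x).symm)) hr
    -- f and g agree on H
    have hagree : ∀ h ∈ H, f h = g h := by
      intro h hh
      rw [key]
      funext c
      induction c using QuotientGroup.induction_on with
      | H y =>
        simp only [permAut_apply, hθ]
        have : h⁻¹ • ((y : G ⧸ H)) = ((h⁻¹ * y : G) : G ⧸ H) := rfl
        rw [this]
        have h1 : (((h⁻¹ * y : G)) : G ⧸ H) = ((1 : G) : G ⧸ H) ↔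
            ((y : G) : G ⧸ H) = ((1 : G) : G ⧸ H) := by
          rw [QuotientGroup.eq, QuotientGroup.eq]
          simp only [mul_one, mul_inv_rev, inv_inv]
          constructor
          · intro hx; simpa using H.mul_mem hx (H.inv_mem hh)
          · intro hx; exact H.mul_mem hx hh
        simp only [h1]
    -- contradiction at a
    have := ha ⟨W⟩ hmemW f g hagree
    rw [key] at this
    have h2 := congrFun this ((a : G) : G ⧸ H)
    have ha1 : a⁻¹ • ((a : G) : G ⧸ H) = ((1 : G) : G ⧸ H) := by
      have : a⁻¹ • ((a : G) : G ⧸ H) = ((a⁻¹ * a : G) : G ⧸ H) := rfl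
      rw [this, inv_mul_cancel]
    have hane : ((a : G) : G ⧸ H) ≠ ((1 : G) : G ⧸ H) := fun hco =>
      haH (by simpa using H.inv_mem (by simpa using QuotientGroup.eq.mp hco))
    rw [permAut_apply, ha1] at h2
    simp only [hθ, if_pos rfl, if_neg hane] at h2
    exact haH (h2 ▸ H.one_mem)
  · intro a haH
    intro K hK f g hfg
    exact hfg a haH
end

section
/- Two varieties of groups 𝒩 and 𝒬 are disjoint (that is, every group belonging to both 𝒩 and 𝒬 is trivial) if and only if they are of relatively prime exponents, i.e., there exist natural numbers n and m with gcd(n, m) = 1 such that every group in 𝒩 satisfies g^n = 1 for all its elements g, and every group in 𝒬 satisfies g^m = 1 for all its elements g. -/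
/-- Two varieties are disjoint if every group belonging to both is trivial. -/
def DisjointVarieties (𝒩 𝒬 : GroupVariety.{u}) : Prop :=
  ∀ G : GroupT.{u}, 𝒩.Mem G → 𝒬.Mem G → Subsingleton G.carrier

/-!
If a group of `𝒩` and a group of `𝒬` contain elements `a`, `b` with `orderOf b ∣ orderOf a`, then
`⟨b⟩` is a quotient of `⟨a⟩`, so it lies in both varieties and `b = 1`; hence orders of elements
of `𝒩`-groups are coprime to orders of elements of `𝒬`-groups. A variety with no positive exponent
contains an element of infinite order (in a product of witnesses), and a prime dividing its least
positive exponent divides the order of one of its elements. So the least exponents of `𝒩` and `𝒬`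
(read as `0` when there is none) are coprime.
-/

universe u

open Subgroup

theorem exists_surjective_zpowers_of_orderOf_dvd {G H : Type*} [Group G] [Group H]
    {a : G} {b : H} (hd : orderOf b ∣ orderOf a) :
    ∃ f : zpowers a →* zpowers b, Function.Surjective f := by
  let φ : Multiplicative ℤ →* zpowers a := (zpowersHom G a).rangeRestrict
  let ψ : Multiplicative ℤ →* zpowers b := (zpowersHom H b).rangeRestrict
  have hker : φ.ker ≤ ψ.ker := by
    intro k hk
    rw [MonoidHom.mem_ker, ← OneMemClass.coe_eq_one] at hk ⊢
    change a ^ k.toAdd = 1 at hk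
    change b ^ k.toAdd = 1
    rw [← orderOf_dvd_iff_zpow_eq_one] at hk ⊢
    exact (Int.natCast_dvd_natCast.mpr hd).trans hk
  let f := φ.liftOfRightInverse _
    (Function.rightInverse_surjInv (MonoidHom.rangeRestrict_surjective _)) ⟨ψ, hker⟩
  have hf : f.comp φ = ψ := MonoidHom.liftOfRightInverse_comp ..
  refine ⟨f, Function.Surjective.of_comp (g := φ) ?_⟩
  rw [← MonoidHom.coe_comp, hf]
  exact MonoidHom.rangeRestrict_surjective _

namespace GroupVariety

variable (V : GroupVariety.{u})

def HasExponent (n : ℕ) : Prop :=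
  ∀ G : GroupT.{u}, V.Mem G → ∀ g : G.carrier, g ^ n = 1

/-- The least positive exponent of `V`, or `0` if there is none (as for `Monoid.exponent`). -/
noncomputable def exponent : ℕ :=
  sInf {n | 0 < n ∧ V.HasExponent n}

theorem hasExponent_exponent : V.HasExponent V.exponent := by
  by_cases h : {n | 0 < n ∧ V.HasExponent n}.Nonempty
  · exact (Nat.sInf_mem h).2
  · rw [Set.not_nonempty_iff_eq_empty] at h
    intro G _ g
    rw [exponent, h, Nat.sInf_empty, pow_zero]

theorem not_hasExponent_of_lt_exponent {k : ℕ} (hk : 0 < k) (hlt : k < V.exponent) :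
    ¬ V.HasExponent k :=
  fun h => Nat.notMem_of_lt_sInf hlt ⟨hk, h⟩

theorem not_hasExponent_of_exponent_eq_zero (h0 : V.exponent = 0) {k : ℕ} (hk : 0 < k) :
    ¬ V.HasExponent k := fun h =>
  (Nat.sInf_eq_zero.mp h0).elim (fun h0 => h0.1.false)
    fun hempty => Set.eq_empty_iff_forall_notMem.mp hempty k ⟨hk, h⟩

variable {V}

theorem mem_zpowers_of_orderOf_dvd {G : GroupT.{u}} (hG : V.Mem G) (a : G.carrier)
    (H : GroupT.{u}) (b : H.carrier) (hd : orderOf b ∣ orderOf a) :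
    V.Mem ⟨zpowers b⟩ := by
  obtain ⟨f, hf⟩ := exists_surjective_zpowers_of_orderOf_dvd hd
  exact V.quotient_closed ⟨zpowers a⟩ ⟨zpowers b⟩ f hf (V.subgroup_closed G _ hG)

theorem exists_orderOf_eq_zero (h0 : V.exponent = 0) :
    ∃ G : GroupT.{u}, V.Mem G ∧ ∃ x : G.carrier, orderOf x = 0 := by
  have hwit : ∀ i : ℕ, ∃ G : GroupT.{u}, V.Mem G ∧ ∃ g : G.carrier, g ^ (i + 1) ≠ 1 := by
    intro i
    simpa [HasExponent] using V.not_hasExponent_of_exponent_eq_zero h0 i.succ_pos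
  choose F hF g hg using hwit
  refine ⟨⟨∀ i : ULift.{u} ℕ, (F i.down).carrier⟩, V.pi_closed _ _ fun i => hF i.down,
    fun i => g i.down, orderOf_eq_zero_iff'.mpr fun n hn hx => ?_⟩
  obtain ⟨i, rfl⟩ := Nat.exists_eq_add_one_of_ne_zero hn.ne'
  exact hg i (congrFun hx ⟨i⟩)

theorem exists_dvd_orderOf_of_dvd_exponent {p : ℕ} (hp : p.Prime) (hpV : p ∣ V.exponent) :
    ∃ G : GroupT.{u}, V.Mem G ∧ ∃ g : G.carrier, p ∣ orderOf g := by
  rcases (V.exponent).eq_zero_or_pos with h0 | hpos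
  · obtain ⟨G, hG, x, hx⟩ := exists_orderOf_eq_zero h0
    exact ⟨G, hG, x, hx ▸ dvd_zero p⟩
  · have hlt : V.exponent / p < V.exponent := Nat.div_lt_self hpos hp.one_lt
    have hdivpos : 0 < V.exponent / p := Nat.div_pos (Nat.le_of_dvd hpos hpV) hp.pos
    obtain ⟨G, hG, g, hg⟩ :
        ∃ G : GroupT.{u}, V.Mem G ∧ ∃ g : G.carrier, g ^ (V.exponent / p) ≠ 1 := by
      simpa [HasExponent] using V.not_hasExponent_of_lt_exponent hdivpos hlt
    refine ⟨G, hG, g, by_contra fun hpg => hg ?_⟩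
    have hcop : (orderOf g).Coprime p := (hp.coprime_iff_not_dvd.mpr hpg).symm
    refine orderOf_dvd_iff_pow_eq_one.mp (hcop.dvd_of_dvd_mul_right ?_)
    rw [Nat.div_mul_cancel hpV]
    exact orderOf_dvd_of_pow_eq_one (V.hasExponent_exponent G hG g)

end GroupVariety

namespace DisjointVarieties

variable {𝒩 𝒬 : GroupVariety.{u}}

theorem symm (h : DisjointVarieties 𝒩 𝒬) : DisjointVarieties 𝒬 𝒩 :=
  fun G h𝒬 h𝒩 => h G h𝒩 h𝒬

theorem eq_one_of_orderOf_dvd (hdisj : DisjointVarieties 𝒩 𝒬) {G H : GroupT.{u}}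
    (hG : 𝒩.Mem G) (hH : 𝒬.Mem H) (a : G.carrier) (b : H.carrier)
    (hd : orderOf b ∣ orderOf a) : b = 1 := by
  have := hdisj _ (GroupVariety.mem_zpowers_of_orderOf_dvd hG a H b hd)
    (𝒬.subgroup_closed H _ hH)
  exact congrArg Subtype.val (Subsingleton.elim (⟨b, mem_zpowers b⟩ : zpowers b) 1)

theorem coprime_orderOf (hdisj : DisjointVarieties 𝒩 𝒬) {G H : GroupT.{u}}
    (hG : 𝒩.Mem G) (hH : 𝒬.Mem H) (a : G.carrier) (b : H.carrier) :
    (orderOf a).Coprime (orderOf b) := by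
  by_cases ha : orderOf a = 0
  · rw [hdisj.eq_one_of_orderOf_dvd hG hH a b (ha ▸ dvd_zero _), orderOf_one]
    exact Nat.coprime_one_right _
  by_cases hb : orderOf b = 0
  · rw [hdisj.symm.eq_one_of_orderOf_dvd hH hG b a (hb ▸ dvd_zero _), orderOf_one]
    exact Nat.coprime_one_left _
  set d := (orderOf a).gcd (orderOf b)
  have hc : orderOf (b ^ (orderOf b / d)) = d :=
    orderOf_pow_orderOf_div hb (Nat.gcd_dvd_right ..)
  have hc1 : b ^ (orderOf b / d) = 1 :=
    hdisj.eq_one_of_orderOf_dvd hG hH a _ (by rw [hc]; exact Nat.gcd_dvd_left ..)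
  rw [hc1, orderOf_one] at hc
  exact hc.symm

theorem coprime_exponent (hdisj : DisjointVarieties 𝒩 𝒬) :
    𝒩.exponent.Coprime 𝒬.exponent := by
  by_contra h
  obtain ⟨p, hp, hpd⟩ := Nat.exists_prime_and_dvd h
  obtain ⟨G, hG, a, ha⟩ :=
    𝒩.exists_dvd_orderOf_of_dvd_exponent hp (hpd.trans (Nat.gcd_dvd_left ..))
  obtain ⟨H, hH, b, hb⟩ :=
    𝒬.exists_dvd_orderOf_of_dvd_exponent hp (hpd.trans (Nat.gcd_dvd_right ..))
  exact hp.one_lt.ne' (Nat.eq_one_of_dvd_coprimes (hdisj.coprime_orderOf hG hH a b) ha hb)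

end DisjointVarieties

theorem stmt10 (𝒩 𝒬 : GroupVariety.{u}) :
    DisjointVarieties 𝒩 𝒬 ↔
      ∃ n m : ℕ, Nat.gcd n m = 1 ∧
        (∀ G : GroupT.{u}, 𝒩.Mem G → ∀ g : G.carrier, g ^ n = 1) ∧
        (∀ G : GroupT.{u}, 𝒬.Mem G → ∀ g : G.carrier, g ^ m = 1) := by
  refine ⟨fun hdisj => ?_, fun ⟨n, m, hnm, hn, hm⟩ G hG𝒩 hG𝒬 => ?_⟩
  · exact ⟨𝒩.exponent, 𝒬.exponent, hdisj.coprime_exponent,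
      𝒩.hasExponent_exponent, 𝒬.hasExponent_exponent⟩
  · refine subsingleton_of_forall_eq 1 fun g => orderOf_eq_one_iff.mp ?_
    exact Nat.eq_one_of_dvd_coprimes hnm (orderOf_dvd_of_pow_eq_one (hn G hG𝒩 g))
      (orderOf_dvd_of_pow_eq_one (hm G hG𝒬 g))
end

section
/- Let 𝒩 and 𝒬 be disjoint nontrivial varieties of groups and 𝒱 = 𝒩𝒬. Let G be a group belonging to 𝒩 and H a subgroup of G. Then dom_G^{𝒩𝒬}(H) = dom_G^𝒩(H). -/
def mulEquivOfSubsingleton (A B : Type*) [Group A] [Group B] [Subsingleton A]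
    [Subsingleton B] : A ≃* B where
  toFun := fun _ => 1
  invFun := fun _ => 1
  left_inv := fun _ => Subsingleton.elim _ _
  right_inv := fun _ => Subsingleton.elim _ _
  map_mul' := fun _ _ => Subsingleton.elim _ _

theorem stmt11 (𝒩 𝒬 : GroupVariety.{u}) (h𝒩 : 𝒩.IsNontrivial) (h𝒬 : 𝒬.IsNontrivial)
    (hdisj : DisjointVarieties 𝒩 𝒬)
    (G : Type u) [Group G] (hG : 𝒩.Mem ⟨G⟩) (H : Subgroup G) :
    dominion (ProductVariety 𝒩 𝒬) G H = dominion 𝒩.Mem G H := by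
  apply Set.eq_of_subset_of_subset
  ·
    intro a ha K hK f g hfg
    refine ha K ?_ f g hfg
    refine ⟨⊤, inferInstance, 𝒩.subgroup_closed K ⊤ hK, ?_⟩
    -- K ⧸ ⊤ is trivial, and 𝒬 contains a trivial group
    obtain ⟨⟨T, hT, _⟩, _⟩ := h𝒬
    have hbot : 𝒬.Mem ⟨(⊥ : Subgroup T.carrier)⟩ := 𝒬.subgroup_closed T ⊥ hT
    have : Subsingleton (K.carrier ⧸ (⊤ : Subgroup K.carrier)) :=
      QuotientGroup.subsingleton_quotient_top
    exact 𝒬.iso_closed (mulEquivOfSubsingleton _ _) hbot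
  · intro a ha K hK f g hfg
    obtain ⟨M, hM, hMN, hMQ⟩ := hK
    -- show f.range ≤ M and g.range ≤ M
    have key : ∀ φ : G →* K.carrier, ∀ x : G, φ x ∈ M := by
      intro φ x
      set ψ : G →* K.carrier ⧸ M := (QuotientGroup.mk' M).comp φ with hψ
      have h1 : 𝒩.Mem ⟨ψ.range⟩ :=
        𝒩.quotient_closed ⟨G⟩ ⟨ψ.range⟩ ψ.rangeRestrict ψ.rangeRestrict_surjective hG
      have h2 : 𝒬.Mem ⟨ψ.range⟩ := 𝒬.subgroup_closed ⟨K.carrier ⧸ M⟩ ψ.range hMQ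
      have hsub : Subsingleton ψ.range := hdisj ⟨ψ.range⟩ h1 h2
      have : ψ x = 1 := by
        have := Subsingleton.elim (⟨ψ x, x, rfl⟩ : ψ.range) (⟨1, (map_one ψ) ▸ ⟨1, rfl⟩⟩)
        exact congrArg Subtype.val this
      simpa [ψ, QuotientGroup.eq_one_iff] using this
    set f' : G →* M := f.codRestrict M (key f) with hf'
    set g' : G →* M := g.codRestrict M (key g) with hg'
    have hagree : ∀ h ∈ H, f' h = g' h := by
      intro h hh
      ext
      exact hfg h hh
    have := ha ⟨M⟩ hMN f' g' hagree
    exact congrArg Subtype.val this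
end

section
/- Let 𝒩 and 𝒬 be disjoint nontrivial varieties of groups and 𝒱 = 𝒩𝒬, and let G be a group belonging to 𝒬. Then G is absolutely closed in 𝒱: for every group K ∈ 𝒱 and every injective homomorphism i : G → K, the dominion of the image i(G) in K in the class 𝒱 equals i(G). -/
/-! ### Auxiliary lemmas -/

/-- Varieties are closed under binary products. -/
lemma GroupVariety.prod_mem (V : GroupVariety.{u}) {A B : Type u} [Group A] [Group B]
    (hA : V.Mem ⟨A⟩) (hB : V.Mem ⟨B⟩) : V.Mem ⟨A × B⟩ := by
  have h := V.pi_closed (ULift.{u} Bool)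
    (fun b => bif b.down then (⟨A⟩ : GroupT.{u}) else ⟨B⟩)
    (fun b => by rcases b with ⟨b⟩; cases b <;> [exact hB; exact hA])
  refine V.iso_closed (G := ⟨∀ b : ULift.{u} Bool,
      (bif b.down then (⟨A⟩ : GroupT.{u}) else ⟨B⟩).carrier⟩) ?_ h
  exact
    { toFun := fun F => (F ⟨true⟩, F ⟨false⟩)
      invFun := fun p b => ULift.rec (fun b => Bool.rec (motive := fun b =>
          (bif b then (⟨A⟩ : GroupT.{u}) else ⟨B⟩).carrier) p.2 p.1 b) b
      left_inv := fun F => by funext b; rcases b with ⟨b⟩; cases b <;> rfl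
      right_inv := fun p => rfl
      map_mul' := fun F F' => rfl }

/-- A variety contains every subgroup of a group whose ambient subgroup is in it. -/
lemma GroupVariety.mem_of_le (V : GroupVariety.{u}) {K : Type u} [Group K]
    {H H' : Subgroup K} (h : H ≤ H') (hH' : V.Mem ⟨H'⟩) : V.Mem ⟨H⟩ :=
  V.iso_closed (Subgroup.subgroupOfEquivOfLe h)
    (V.subgroup_closed ⟨H'⟩ (H.subgroupOf H') hH')

/-- The translation action of a group `Q` on the group of functions `Q → A`. -/
def translationAut (Q : Type u) [Group Q] (A : Type u) [Group A] :
    Q →* MulAut (Q → A) :=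
  MonoidHom.mk'
    (fun q =>
      { toFun := fun b c => b (q⁻¹ * c)
        invFun := fun b c => b (q * c)
        left_inv := fun b => by funext c; simp [← mul_assoc]
        right_inv := fun b => by funext c; simp [← mul_assoc]
        map_mul' := fun b b' => rfl })
    (fun q q' => by
      ext b c
      show b ((q * q')⁻¹ * c) = b (q'⁻¹ * (q⁻¹ * c))
      rw [mul_inv_rev, mul_assoc])

@[simp] lemma translationAut_apply {Q : Type u} [Group Q] {A : Type u} [Group A]
    (q : Q) (b : Q → A) (c : Q) : translationAut Q A q b c = b (q⁻¹ * c) := rfl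

/-- Existence of a suitable `Gs`-equivariant section of `K → K ⧸ N`. -/
lemma exists_good_section {K : Type u} [Group K] (Gs N : Subgroup K) [hNN : N.Normal]
    (hGN : ∀ x ∈ Gs, x ∈ N → x = 1) (hNnt : ∃ n ∈ N, n ≠ (1 : K))
    (a : K) (ha : a ∉ Gs) :
    ∃ s : K ⧸ N → K,
      (∀ c, ((s c : K) : K ⧸ N) = c) ∧
      (∀ g ∈ Gs, ∀ c, s ((g : K ⧸ N) * c) = g * s c) ∧
      s 1 = 1 ∧ s ((a⁻¹ : K) : K ⧸ N) ≠ a⁻¹ := by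
  classical
  obtain ⟨n₀, hn₀N, hn₀⟩ := hNnt
  -- the action of Gs on K ⧸ N is free
  have hfree : ∀ g ∈ Gs, ∀ c : K ⧸ N, (g : K ⧸ N) * c = c → g = 1 := by
    intro g hg c hc
    obtain ⟨x, rfl⟩ := QuotientGroup.mk_surjective c
    rw [← QuotientGroup.mk_mul] at hc
    have h1 : (g * x)⁻¹ * x ∈ N := QuotientGroup.eq.mp hc
    have h2 : x⁻¹ * g⁻¹ * x ∈ N := by
      simpa [mul_inv_rev, mul_assoc] using h1
    have h3 : g⁻¹ ∈ N := by
      have := hNN.conj_mem _ h2 x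
      simpa [mul_assoc] using this
    exact hGN g hg ((Subgroup.inv_mem_iff N).mp h3)
  -- the orbit equivalence relation
  set R : K ⧸ N → K ⧸ N → Prop := fun c c' => ∃ g ∈ Gs, (g : K ⧸ N) * c = c' with hRdef
  have hR : Equivalence R := by
    constructor
    · intro c; exact ⟨1, Gs.one_mem, by simp⟩
    · rintro c c' ⟨g, hg, rfl⟩
      exact ⟨g⁻¹, inv_mem hg, by rw [← mul_assoc, ← QuotientGroup.mk_mul]; simp⟩
    · rintro c c' c'' ⟨g, hg, rfl⟩ ⟨g', hg', rfl⟩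
      exact ⟨g' * g, mul_mem hg' hg, by rw [QuotientGroup.mk_mul, mul_assoc]⟩
  let sd : Setoid (K ⧸ N) := ⟨R, hR⟩
  let rep : K ⧸ N → K ⧸ N := fun c => (Quotient.mk sd c).out
  have hrepR : ∀ c, R (rep c) c := fun c =>
    Quotient.exact (Quotient.out_eq (Quotient.mk sd c))
  have hrepEq : ∀ c c', R c c' → rep c = rep c' := by
    intro c c' h
    show (Quotient.mk sd c).out = (Quotient.mk sd c').out
    rw [Quotient.sound h]
  -- choose the unique group element carrying the representative to the coset
  have hex : ∀ c : K ⧸ N, ∃ g : K, g ∈ Gs ∧ (g : K ⧸ N) * rep c = c := by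
    intro c; obtain ⟨g, hg, h⟩ := hrepR c; exact ⟨g, hg, h⟩
  choose gg hggGs hggact using hex
  have huniq : ∀ (g g' : K), g ∈ Gs → g' ∈ Gs → ∀ c : K ⧸ N,
      (g : K ⧸ N) * c = (g' : K ⧸ N) * c → g = g' := by
    intro g g' hg hg' c h
    have h2 : ((g'⁻¹ * g : K) : K ⧸ N) * c = c := by
      rw [QuotientGroup.mk_mul, mul_assoc, h, ← mul_assoc, ← QuotientGroup.mk_mul]
      simp
    have h3 := hfree _ (mul_mem (inv_mem hg') hg) c h2
    exact (inv_mul_eq_one.mp h3).symm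
  set c₁ : K ⧸ N := ((a⁻¹ : K) : K ⧸ N) with hc₁def
  -- choose a good representative in the fiber over `rep c₁`
  have hts : ∃ x : K, ((x : K ⧸ N) = rep c₁) ∧ gg c₁ * x ≠ a⁻¹ := by
    by_cases hx : gg c₁ * (rep c₁).out = a⁻¹
    · refine ⟨(rep c₁).out * n₀, ?_, ?_⟩
      · rw [QuotientGroup.mk_mul, (QuotientGroup.eq_one_iff n₀).mpr hn₀N, mul_one,
          QuotientGroup.out_eq']
      · intro h
        rw [← hx, ← mul_assoc] at h
        apply hn₀
        have h' : gg c₁ * (rep c₁).out * n₀ = gg c₁ * (rep c₁).out * 1 := by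
          rw [mul_one]; exact h
        exact mul_left_cancel h'
    · exact ⟨(rep c₁).out, QuotientGroup.out_eq' _, hx⟩
  obtain ⟨ts, hts1, hts2⟩ := hts
  -- the section
  classical
  let t : K ⧸ N → K := fun c =>
    if c = rep 1 then (gg 1)⁻¹ else if c = rep c₁ then ts else c.out
  have htval : ∀ c, t c
      = if c = rep 1 then (gg 1)⁻¹ else if c = rep c₁ then ts else c.out :=
    fun _ => rfl
  have ht : ∀ c, ((t (rep c) : K) : K ⧸ N) = rep c := by
    intro c
    rw [htval]
    by_cases h1 : rep c = rep 1
    · rw [if_pos h1, h1]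
      have hr1 : rep 1 = ((gg 1 : K) : K ⧸ N)⁻¹ :=
        eq_inv_of_mul_eq_one_right (hggact 1)
      rw [QuotientGroup.mk_inv, hr1]
    · rw [if_neg h1]
      by_cases h2 : rep c = rep c₁
      · rw [if_pos h2, h2]; exact hts1
      · rw [if_neg h2]; exact QuotientGroup.out_eq' _
  let s : K ⧸ N → K := fun c => gg c * t (rep c)
  have hsval : ∀ c, s c = gg c * t (rep c) := fun _ => rfl
  have hsec : ∀ c, ((s c : K) : K ⧸ N) = c := by
    intro c
    rw [hsval, QuotientGroup.mk_mul, ht c, hggact c]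
  have hrepmul : ∀ g ∈ Gs, ∀ c, rep ((g : K ⧸ N) * c) = rep c :=
    fun g hg c => (hrepEq c _ ⟨g, hg, rfl⟩).symm
  have hggmul : ∀ g ∈ Gs, ∀ c, gg ((g : K ⧸ N) * c) = g * gg c := by
    intro g hg c
    refine huniq _ _ (hggGs _) (mul_mem hg (hggGs c)) (rep c) ?_
    have h1 : (gg ((g : K ⧸ N) * c) : K ⧸ N) * rep ((g : K ⧸ N) * c)
        = (g : K ⧸ N) * c := hggact _
    rw [hrepmul g hg c] at h1
    rw [h1, QuotientGroup.mk_mul, mul_assoc, hggact c]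
  have hequi : ∀ g ∈ Gs, ∀ c, s ((g : K ⧸ N) * c) = g * s c := by
    intro g hg c
    rw [hsval, hsval, hrepmul g hg c, hggmul g hg c, mul_assoc]
  have hs1 : s 1 = 1 := by
    rw [hsval, htval, if_pos rfl]
    exact mul_inv_cancel _
  have hsc1 : s c₁ ≠ a⁻¹ := by
    rw [hsval, htval]
    by_cases h1 : rep c₁ = rep 1
    · rw [if_pos h1]
      intro h
      apply ha
      have haeq : a = gg 1 * (gg c₁)⁻¹ := by
        rw [← inv_inv a, ← h]; rw [mul_inv_rev]; simp
      rw [haeq]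
      exact mul_mem (hggGs 1) (inv_mem (hggGs c₁))
    · rw [if_neg h1, if_pos rfl]
      exact hts2
  exact ⟨s, hsec, hequi, hs1, hsc1⟩

/-- The key construction: if `Gs` meets the normal subgroup `N ∈ 𝒩` (nontrivial,
with quotient in `𝒬`) trivially, then any element outside `Gs` can be separated by two
homomorphisms into a group of the product variety agreeing on `Gs`. -/
lemma separation_lemma (𝒩 𝒬 : GroupVariety.{u}) {K : Type u} [Group K]
    (Gs N : Subgroup K) [hNN : N.Normal]
    (hN : 𝒩.Mem ⟨↥N⟩) (hQ : 𝒬.Mem ⟨K ⧸ N⟩)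
    (hGN : ∀ x ∈ Gs, x ∈ N → x = 1) (hNnt : ∃ n ∈ N, n ≠ (1 : K))
    (a : K) (ha : a ∉ Gs) :
    ∃ W : GroupT.{u}, ProductVariety 𝒩 𝒬 W ∧
      ∃ f g : K →* W.carrier, (∀ h ∈ Gs, f h = g h) ∧ f a ≠ g a := by
  obtain ⟨s, hsec, hequi, hs1, hsc1⟩ := exists_good_section Gs N hGN hNnt a ha
  let Q : Type u := K ⧸ N
  let π : K →* Q := QuotientGroup.mk' N
  let φ : Q →* MulAut (Q → ↥N) := translationAut Q ↥N
  -- the wreath-type product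
  let W : Type u := (Q → ↥N) ⋊[φ] Q
  have hsec' : ∀ c : Q, π (s c) = c := hsec
  -- membership of the twisted components in N
  have hd : ∀ (x : K) (c : Q), (s c)⁻¹ * x * s ((π x)⁻¹ * c) ∈ N := by
    intro x c
    rw [← QuotientGroup.eq_one_iff]
    show π ((s c)⁻¹ * x * s ((π x)⁻¹ * c)) = 1
    rw [map_mul, map_mul, map_inv, hsec', hsec']
    group
  -- the Kaloujnine–Krasner style embedding
  let dfun : K → Q → ↥N := fun x c => ⟨(s c)⁻¹ * x * s ((π x)⁻¹ * c), hd x c⟩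
  let κ : K →* W :=
    { toFun := fun x => ⟨dfun x, π x⟩
      map_one' := by
        refine SemidirectProduct.ext ?_ (map_one π)
        funext c
        refine Subtype.ext ?_
        show (s c)⁻¹ * 1 * s ((π 1)⁻¹ * c) = 1
        rw [map_one]
        group
      map_mul' := by
        intro x y
        refine SemidirectProduct.ext ?_ (map_mul π x y)
        funext c
        refine Subtype.ext ?_
        show (s c)⁻¹ * (x * y) * s ((π (x * y))⁻¹ * c)
          = ((s c)⁻¹ * x * s ((π x)⁻¹ * c))
            * ((s ((π x)⁻¹ * c))⁻¹ * y * s ((π y)⁻¹ * ((π x)⁻¹ * c)))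
        rw [map_mul, mul_inv_rev, mul_assoc (π y)⁻¹ ((π x)⁻¹) c]
        group
      }
  let ι : K →* W := (SemidirectProduct.inr (φ := φ)).comp π
  refine ⟨⟨W⟩, ?_, κ, ι, ?_, ?_⟩
  · -- W belongs to the product variety
    refine ⟨(SemidirectProduct.rightHom (φ := φ)).ker, inferInstance, ?_, ?_⟩
    · have hbase : 𝒩.Mem ⟨Q → ↥N⟩ := 𝒩.pi_closed Q (fun _ => ⟨↥N⟩) (fun _ => hN)
      have e1 : (Q → ↥N) ≃* ↥(SemidirectProduct.inl (φ := φ)).range :=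
        MonoidHom.ofInjective SemidirectProduct.inl_injective
      have e2 : ↥(SemidirectProduct.inl (φ := φ)).range
          ≃* ↥(SemidirectProduct.rightHom (φ := φ)).ker :=
        MulEquiv.subgroupCongr SemidirectProduct.range_inl_eq_ker_rightHom
      exact 𝒩.iso_closed (e1.trans e2) hbase
    · have e3 : (W ⧸ (SemidirectProduct.rightHom (φ := φ)).ker) ≃* Q :=
        QuotientGroup.quotientKerEquivOfSurjective _
          SemidirectProduct.rightHom_surjective
      exact 𝒬.iso_closed e3.symm hQ
  · -- κ and ι agree on Gs
    intro h hh
    refine SemidirectProduct.ext ?_ rfl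
    funext c
    refine Subtype.ext ?_
    show (s c)⁻¹ * h * s ((π h)⁻¹ * c) = 1
    have hπ : (π h)⁻¹ * c = ((h⁻¹ : K) : K ⧸ N) * c := by rw [← map_inv]; rfl
    rw [hπ, hequi h⁻¹ (inv_mem hh) c]
    group
  · -- κ and ι differ at a
    intro h
    have h1 := congrArg SemidirectProduct.left h
    have h2 := congrFun h1 (1 : Q)
    have h3 := congrArg Subtype.val h2
    have h4 : (s 1)⁻¹ * a * s ((π a)⁻¹ * 1) = 1 := h3
    rw [hs1, mul_one, inv_one, one_mul] at h4
    apply hsc1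
    have hπ : (π a)⁻¹ = ((a⁻¹ : K) : K ⧸ N) := by rw [← map_inv]; rfl
    rw [hπ] at h4
    exact eq_inv_of_mul_eq_one_right h4

theorem stmt12 (𝒩 𝒬 : GroupVariety.{u}) (h𝒩 : 𝒩.IsNontrivial) (h𝒬 : 𝒬.IsNontrivial)
    (hdisj : DisjointVarieties 𝒩 𝒬)
    (G : Type u) [Group G] (hG : 𝒬.Mem ⟨G⟩) :
    ∀ (K : Type u) [Group K], ProductVariety 𝒩 𝒬 ⟨K⟩ →
      ∀ i : G →* K, Function.Injective i →
        dominion (ProductVariety 𝒩 𝒬) K i.range = (i.range : Set K) := by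
  intro K _ hK i hi
  obtain ⟨M, hMnorm, hM𝒩, hMQ⟩ := hK
  haveI := hMnorm
  obtain ⟨⟨A, hA𝒩, hAnt⟩, -⟩ := h𝒩
  apply Set.Subset.antisymm
  · -- dominion ⊆ range
    intro a hadom
    by_contra haG
    have haG' : a ∉ i.range := by simpa using haG
    -- work in K × A
    let j : K →* K × A.carrier := MonoidHom.inl K A.carrier
    let Gh : Subgroup (K × A.carrier) := Subgroup.map j i.range
    let Nh : Subgroup (K × A.carrier) := M.prod ⊤
    haveI : Nh.Normal := Subgroup.prod_normal M ⊤
    -- Nh is an 𝒩-group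
    have hNh : 𝒩.Mem ⟨↥Nh⟩ := by
      have hMA : 𝒩.Mem ⟨↥M × A.carrier⟩ := GroupVariety.prod_mem 𝒩 hM𝒩 hA𝒩
      have e : ↥Nh ≃* ↥M × A.carrier :=
        (Subgroup.prodEquiv M ⊤).trans
          ((MulEquiv.refl ↥M).prodCongr Subgroup.topEquiv)
      exact 𝒩.iso_closed e.symm hMA
    -- (K × A) ⧸ Nh is a 𝒬-group
    have hQh : 𝒬.Mem ⟨(K × A.carrier) ⧸ Nh⟩ := by
      let ψ : (K × A.carrier) →* K ⧸ M :=
        (QuotientGroup.mk' M).comp (MonoidHom.fst K A.carrier)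
      have hψs : Function.Surjective ψ := by
        intro q
        obtain ⟨x, rfl⟩ := QuotientGroup.mk'_surjective M q
        exact ⟨(x, 1), rfl⟩
      have hker : ψ.ker = Nh := by
        ext ⟨x, y⟩
        simp [ψ, Nh, MonoidHom.mem_ker, Subgroup.mem_prod]
      have e : ((K × A.carrier) ⧸ Nh) ≃* (K ⧸ M) :=
        (QuotientGroup.quotientMulEquivOfEq hker.symm).trans
          (QuotientGroup.quotientKerEquivOfSurjective ψ hψs)
      exact 𝒬.iso_closed e.symm hMQ
    -- Gh meets Nh trivially
    have hrange : 𝒬.Mem ⟨↥i.range⟩ := 𝒬.iso_closed (MonoidHom.ofInjective hi) hG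
    have hP : ∀ x : K, x ∈ i.range → x ∈ M → x = 1 := by
      intro x hx hxM
      have h1 : 𝒬.Mem ⟨↥(i.range ⊓ M)⟩ := 𝒬.mem_of_le inf_le_left hrange
      have h2 : 𝒩.Mem ⟨↥(i.range ⊓ M)⟩ := 𝒩.mem_of_le inf_le_right hM𝒩
      have h3 := hdisj _ h2 h1
      have h4 : (⟨x, ⟨hx, hxM⟩⟩ : ↥(i.range ⊓ M))
          = (⟨1, Subgroup.one_mem _⟩ : ↥(i.range ⊓ M)) := Subsingleton.elim _ _
      exact congrArg Subtype.val h4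
    have hGNh : ∀ x ∈ Gh, x ∈ Nh → x = 1 := by
      rintro x ⟨y, hy, rfl⟩ hxN
      have hyM : y ∈ M := (Subgroup.mem_prod.mp hxN).1
      show j y = 1
      rw [hP y hy hyM, map_one]
    -- Nh is nontrivial
    have hNnt : ∃ n ∈ Nh, n ≠ (1 : K × A.carrier) := by
      obtain ⟨a₀, ha₀⟩ := exists_ne (1 : A.carrier)
      refine ⟨(1, a₀), ⟨Subgroup.one_mem M, Subgroup.mem_top a₀⟩, ?_⟩
      intro h
      exact ha₀ (congrArg Prod.snd h)
    -- (a, 1) is not in Gh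
    have hja : j a ∉ Gh := by
      rintro ⟨y, hy, hxy⟩
      apply haG'
      have h' : y = a := congrArg Prod.fst hxy
      rw [← h']
      simpa using hy
    obtain ⟨Wt, hWmem, f, g, hfg, hne⟩ :=
      separation_lemma 𝒩 𝒬 Gh Nh hNh hQh hGNh hNnt (j a) hja
    apply hne
    exact hadom Wt hWmem (f.comp j) (g.comp j)
      (fun h hh => hfg (j h) ⟨h, hh, rfl⟩)
  · -- range ⊆ dominion
    intro x hx K' hK' f g hfg
    exact hfg x (by simpa using hx)
end

section
/- (Isbell; group case) Let 𝒱 be a variety of groups with instances of nontrivial dominions. Then there exist a finitely generated group G ∈ 𝒱 and a finitely generated subgroup H of G such that H is strictly contained in dom_G^𝒱(H). -/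
/-- A class of groups has instances of nontrivial dominions if there is a group `G`
in the class and a subgroup `H` of `G` strictly contained in its dominion in `G`. -/
def HasNontrivialDominions (C : GroupT.{u} → Prop) : Prop :=
  ∃ (G : GroupT.{u}) (H : Subgroup G.carrier),
    C G ∧ (H : Set G.carrier) ⊂ dominion C G.carrier H

/-!
Dominions are finitary. Let `a ∈ dom_G(H)` and suppose that for every finite `s ⊆ G` the element
`a` lies outside the dominion of `⟨s ∩ H⟩` in `⟨s⟩`. Choose homomorphisms `f_s, g_s : ⟨{a} ∪ s⟩ → K_s`
into groups of `𝒱` that agree on `⟨({a} ∪ s) ∩ H⟩` but separate `a`. Along the filter of cofinal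
finite sets they glue to homomorphisms from `G` into the reduced product of the `K_s`, which lies in
`𝒱` as a quotient of a product; the glued maps agree on `H` but not at `a`.
-/

universe u

open Filter

section

variable {ι : Type*} (l : Filter ι) (K : ι → Type*) [∀ i, Group (K i)]

def eventuallyOneSubgroup : Subgroup (∀ i, K i) where
  carrier := {x | ∀ᶠ i in l, x i = 1}
  one_mem' := Eventually.of_forall fun _ => rfl
  mul_mem' hx hy := (hx.and hy).mono fun i h => by simp [h.1, h.2]
  inv_mem' hx := hx.mono fun i h => by simp [h]

instance : (eventuallyOneSubgroup l K).Normal where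
  conj_mem _ hx g := hx.mono fun i h => by simp [h]

abbrev ReducedProduct := (∀ i, K i) ⧸ eventuallyOneSubgroup l K

variable {l K}

namespace ReducedProduct

theorem mk_eq_mk_iff {x y : ∀ i, K i} :
    (x : ReducedProduct l K) = y ↔ ∀ᶠ i in l, x i = y i := by
  rw [QuotientGroup.eq]
  exact eventually_congr (Eventually.of_forall fun _ => inv_mul_eq_one)

variable {G : Type*} [Group G] {A : ι → Subgroup G} (hA : ∀ x, ∀ᶠ i in l, x ∈ A i)
include hA

/- The value `1` off `A i` is arbitrary: every `x` eventually lies in `A i`. -/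
open Classical in
noncomputable def glue (f : ∀ i, A i →* K i) : G →* ReducedProduct l K :=
  MonoidHom.mk' (fun x => QuotientGroup.mk fun i => if h : x ∈ A i then f i ⟨x, h⟩ else 1)
    fun x y => by
      rw [← QuotientGroup.mk_mul, mk_eq_mk_iff]
      filter_upwards [hA x, hA y] with i hx hy
      simp only [dif_pos hx, dif_pos hy, dif_pos (mul_mem hx hy), Pi.mul_apply]
      exact map_mul (f i) ⟨x, hx⟩ ⟨y, hy⟩

theorem glue_eq_glue_iff (f g : ∀ i, A i →* K i) (x : G) :
    glue hA f x = glue hA g x ↔ ∀ᶠ i in l, ∀ h : x ∈ A i, f i ⟨x, h⟩ = g i ⟨x, h⟩ := by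
  rw [glue, glue, MonoidHom.mk'_apply, MonoidHom.mk'_apply, mk_eq_mk_iff]
  exact eventually_congr ((hA x).mono fun i h => by simp [h])

end ReducedProduct

end

theorem GroupVariety.mem_reducedProduct (V : GroupVariety.{u}) {ι : Type u} {l : Filter ι}
    {K : ι → GroupT.{u}} (hK : ∀ i, V.Mem (K i)) :
    V.Mem ⟨ReducedProduct l fun i => (K i).carrier⟩ :=
  V.quotient_closed _ ⟨ReducedProduct l fun i => (K i).carrier⟩ (QuotientGroup.mk' _)
    (QuotientGroup.mk'_surjective _) (V.pi_closed ι K hK)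

theorem subset_dominion (C : GroupT.{u} → Prop) (G : Type u) [Group G] (H : Subgroup G) :
    (H : Set G) ⊆ dominion C G H :=
  fun h hh _ _ _ _ hfg => hfg h hh

open ReducedProduct in
theorem exists_finset_mem_dominion (V : GroupVariety.{u}) {G : Type u} [Group G]
    {H : Subgroup G} {a : G} (ha : a ∈ dominion V.Mem G H) :
    ∃ (s : Finset G) (has : a ∈ Subgroup.closure (s : Set G)), ⟨a, has⟩ ∈
      dominion V.Mem (Subgroup.closure (s : Set G))
        ((Subgroup.closure ((s : Set G) ∩ H)).subgroupOf (Subgroup.closure s)) := by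
  classical
  by_contra! hnot
  let A : Finset G → Subgroup G := fun s => Subgroup.closure ↑(insert a s)
  have mem_insert : ∀ {x s}, {x} ≤ s → x ∈ insert a s := fun hs =>
    Finset.mem_insert_of_mem (hs (Finset.mem_singleton_self _))
  have hA : ∀ x, ∀ᶠ s in atTop, x ∈ A s := fun x =>
    (eventually_ge_atTop {x}).mono fun _ hs => Subgroup.subset_closure (mem_insert hs)
  have a_mem_A : ∀ s, a ∈ A s := fun s => Subgroup.subset_closure (Finset.mem_insert_self a s)
  have separate : ∀ s, ∃ K : GroupT.{u}, V.Mem K ∧ ∃ f g : A s →* K.carrier,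
      (∀ h ∈ (Subgroup.closure (↑(insert a s) ∩ H)).subgroupOf (A s), f h = g h) ∧
        f ⟨a, a_mem_A s⟩ ≠ g ⟨a, a_mem_A s⟩ := by
    intro s
    have h := hnot (insert a s) (a_mem_A s)
    rw [dominion, Set.mem_ofPred_eq] at h
    push Not at h
    exact h
  choose K hK f g hfg hne using separate
  have agree_on_H : ∀ h ∈ H, glue hA f h = glue hA g h := fun h hh => by
    rw [glue_eq_glue_iff]
    filter_upwards [eventually_ge_atTop {h}] with s hs hmem
    exact hfg s _ (Subgroup.mem_subgroupOf.2 (Subgroup.subset_closure ⟨mem_insert hs, hh⟩))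
  obtain ⟨s, hs⟩ := ((glue_eq_glue_iff hA f g a).1
    (ha _ (V.mem_reducedProduct hK) _ _ agree_on_H)).exists
  exact hne s (hs _)

theorem stmt14 (𝒱 : GroupVariety.{u}) (h : HasNontrivialDominions 𝒱.Mem) :
    ∃ (G : GroupT.{u}) (H : Subgroup G.carrier),
      𝒱.Mem G ∧ Group.FG G.carrier ∧ H.FG ∧
      (H : Set G.carrier) ⊂ dominion 𝒱.Mem G.carrier H := by
  obtain ⟨G, H, hG, hHG⟩ := h
  obtain ⟨a, haD, haH⟩ := Set.exists_of_ssubset hHG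
  obtain ⟨s, has, hdom⟩ := exists_finset_mem_dominion 𝒱 haD
  have hle : Subgroup.closure ((s : Set G.carrier) ∩ H) ≤ Subgroup.closure s :=
    Subgroup.closure_mono Set.inter_subset_left
  refine ⟨⟨Subgroup.closure (s : Set G.carrier)⟩,
    (Subgroup.closure ((s : Set G.carrier) ∩ H)).subgroupOf (Subgroup.closure s),
    𝒱.subgroup_closed G _ hG, Group.closure_finset_fg s,
    (Group.fg_iff_subgroup_fg _).1 (Group.fg_of_surjective
      (f := (Subgroup.subgroupOfEquivOfLe hle).symm.toMonoidHom) (MulEquiv.surjective _)), ?_⟩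
  rw [Set.ssubset_iff_of_subset (subset_dominion _ _ _)]
  exact ⟨_, hdom, fun hmem =>
    haH ((Subgroup.closure_le _).2 Set.inter_subset_right (Subgroup.mem_subgroupOf.1 hmem))⟩
end

section
/- Let F be the free group on countably infinitely many generators, and let W be a set of words (elements of F) containing at least one nonidentity element. Then the verbal subgroup W(F), namely the subgroup of F generated by all images φ(w) with w ∈ W and φ : F → F a group homomorphism, is a free group of countably infinite rank (i.e., it is isomorphic to the free group on countably infinitely many generators). -/
/-!
By Nielsen–Schreier `W(F)` is free, and it is countable, so it suffices to show that it is not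
finitely generated. A finitely generated subgroup of `F` lies in the subgroup generated by
finitely many letters, which is fixed by the retraction killing all other letters. But `W(F)`
is invariant under the injective endomorphism of `F` that moves every letter outside that
finite set, and that endomorphism followed by the retraction is trivial; so a nontrivial
`w ∈ W(F)` would be sent to `1` by an injective map.
-/

/-- The verbal subgroup `W(F)` of the free group `F` on countably many generators,
for a set of words `W`: the subgroup generated by all images `φ w` with `w ∈ W` and
`φ : F →* F` a group homomorphism. -/
def verbalSubgroupOfWords (W : Set (FreeGroup ℕ)) : Subgroup (FreeGroup ℕ) :=
  Subgroup.closure {x : FreeGroup ℕ | ∃ w ∈ W, ∃ φ : FreeGroup ℕ →* FreeGroup ℕ, φ w = x}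

namespace FreeGroup

variable {α : Type*}

theorem exists_finset_mem_closure_image_of (x : FreeGroup α) :
    ∃ s : Finset α, x ∈ Subgroup.closure (of '' (s : Set α)) := by
  classical
  induction x using FreeGroup.induction_on with
  | C1 => exact ⟨∅, Subgroup.one_mem _⟩
  | of a => exact ⟨{a}, Subgroup.subset_closure ⟨a, Finset.mem_singleton_self a, rfl⟩⟩
  | inv_of _ ih =>
    obtain ⟨s, hs⟩ := ih
    exact ⟨s, Subgroup.inv_mem _ hs⟩
  | mul _ _ ihx ihy =>
    obtain ⟨s, hs⟩ := ihx
    obtain ⟨t, ht⟩ := ihy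
    have hmono (u : Finset α) (hu : u ⊆ s ∪ t) :
        Subgroup.closure (of '' (u : Set α)) ≤ Subgroup.closure (of '' ↑(s ∪ t)) :=
      Subgroup.closure_mono (Set.image_mono (Finset.coe_subset.2 hu))
    exact ⟨s ∪ t, Subgroup.mul_mem _ (hmono s Finset.subset_union_left hs)
      (hmono t Finset.subset_union_right ht)⟩

theorem exists_finset_closure_le_closure_image_of (S : Finset (FreeGroup α)) :
    ∃ s : Finset α,
      Subgroup.closure (S : Set (FreeGroup α)) ≤ Subgroup.closure (of '' (s : Set α)) := by
  classical
  choose t ht using exists_finset_mem_closure_image_of (α := α)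
  refine ⟨S.biUnion t, (Subgroup.closure_le _).2 fun x hx => ?_⟩
  have hsub : t x ⊆ S.biUnion t := Finset.subset_biUnion_of_mem t hx
  exact Subgroup.closure_mono (Set.image_mono (Finset.coe_subset.2 hsub)) (ht x)

theorem exists_injective_forall_notMem [Infinite α] (s : Finset α) :
    ∃ f : α → α, Function.Injective f ∧ ∀ a, f a ∉ s := by
  obtain ⟨e⟩ := Cardinal.eq.1 (Cardinal.mk_compl_finset_of_infinite s)
  exact ⟨fun a => e.symm a, Subtype.val_injective.comp e.symm.injective, fun a => (e.symm a).2⟩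

noncomputable def retract (s : Set α) : FreeGroup α →* FreeGroup α :=
  open Classical in lift fun a => if a ∈ s then of a else 1

theorem retract_of_notMem {s : Set α} {a : α} (ha : a ∉ s) : retract s (of a) = 1 := by
  simp [retract, ha]

theorem retract_eq_self_of_mem_closure {s : Set α} {x : FreeGroup α}
    (hx : x ∈ Subgroup.closure (of '' s)) : retract s x = x := by
  refine MonoidHom.eqOn_closure (g := MonoidHom.id _) ?_ hx
  rintro _ ⟨a, ha, rfl⟩
  simp [retract, ha]

theorem not_fg_of_forall_map_le [Infinite α] {H : Subgroup (FreeGroup α)}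
    (hH : ∀ φ : FreeGroup α →* FreeGroup α, H.map φ ≤ H) (hH₁ : H ≠ ⊥) :
    ¬ H.FG := by
  rintro ⟨S, rfl⟩
  obtain ⟨⟨w, hwH⟩, hw₁⟩ := Subgroup.ne_bot_iff_exists_ne_one.1 hH₁
  obtain ⟨s, hs⟩ := exists_finset_closure_le_closure_image_of S
  obtain ⟨f, hf, hfs⟩ := exists_injective_forall_notMem s
  have hmap : map f w ∈ Subgroup.closure (of '' ↑s) := hs (hH (map f) ⟨w, hwH, rfl⟩)
  have hkill : (retract (s : Set α)).comp (map f) = 1 :=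
    ext_hom _ _ fun a => by simpa using retract_of_notMem (hfs a)
  have hfw : map f w = 1 := by
    rw [← retract_eq_self_of_mem_closure hmap, ← MonoidHom.comp_apply, hkill,
      MonoidHom.one_apply]
  exact hw₁ (Subtype.ext (map_injective hf (hfw.trans (map_one _).symm)))

end FreeGroup

theorem IsFreeGroup.nonempty_mulEquiv_freeGroup_nat (G : Type*) [Group G] [IsFreeGroup G]
    [Countable G] (hG : ¬ Group.FG G) : Nonempty (G ≃* FreeGroup ℕ) := by
  have : Countable (Generators G) :=
    ((toFreeGroup G).symm.injective.comp FreeGroup.of_injective).countable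
  have : Infinite (Generators G) := by
    refine not_finite_iff_infinite.1 fun _ => hG ?_
    have : Group.FG (FreeGroup (Generators G)) :=
      Group.fg_iff.2 ⟨_, FreeGroup.closure_range_of _, Set.finite_range _⟩
    exact Group.fg_of_surjective (f := (toFreeGroup G).symm.toMonoidHom)
      (toFreeGroup G).symm.surjective
  obtain ⟨_⟩ := nonempty_denumerable (Generators G)
  exact ⟨(toFreeGroup G).trans (FreeGroup.freeGroupCongr (Denumerable.eqv _))⟩

theorem map_verbalSubgroupOfWords_le (W : Set (FreeGroup ℕ))
    (φ : FreeGroup ℕ →* FreeGroup ℕ) :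
    (verbalSubgroupOfWords W).map φ ≤ verbalSubgroupOfWords W := by
  rw [verbalSubgroupOfWords, MonoidHom.map_closure]
  refine Subgroup.closure_mono ?_
  rintro _ ⟨_, ⟨w, hw, ψ, rfl⟩, rfl⟩
  exact ⟨w, hw, φ.comp ψ, rfl⟩

theorem subset_verbalSubgroupOfWords (W : Set (FreeGroup ℕ)) : W ⊆ verbalSubgroupOfWords W :=
  fun w hw => Subgroup.subset_closure ⟨w, hw, MonoidHom.id _, rfl⟩

theorem stmt17 (W : Set (FreeGroup ℕ)) (hW : ∃ w ∈ W, w ≠ 1) :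
    Nonempty (verbalSubgroupOfWords W ≃* FreeGroup ℕ) := by
  obtain ⟨w, hwW, hw₁⟩ := hW
  have hne : verbalSubgroupOfWords W ≠ ⊥ :=
    Subgroup.ne_bot_iff_exists_ne_one.2
      ⟨⟨w, subset_verbalSubgroupOfWords W hwW⟩, by simpa using hw₁⟩
  refine IsFreeGroup.nonempty_mulEquiv_freeGroup_nat _ fun hfg => ?_
  exact FreeGroup.not_fg_of_forall_map_le (map_verbalSubgroupOfWords_le W) hne
    ((Group.fg_iff_subgroup_fg _).1 hfg)
end
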